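/- arXiv:math/0502198 — 9 statements merged into one kernel-verified Lean document; each statement's English description precedes it below -/
import Mathlib

section
/- Let A be a local ring with residue field k and let P^{-1} → P^0 → P^1 be a complex of finite free A-modules such that the cohomology at the middle spot of the base-changed complex P⊗k vanishes. Then there is a direct sum decomposition P^0 = I ⊕ K of finite free A-modules such that the map P^{-1} → P^0 factors through a surjection P^{-1} ↠ I and the map P^0 → P^1 restricts to an injection K ↪ P^1. -/
/-!
Since tensoring is right exact, the vanishing of `H⁰(P ⊗ k)` says exactly that the map
`coker d⁻¹ → P¹` induced by `d⁰` stays injective modulo `𝔪`. Over a local ring this makes it a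
split injection into a finite free module, so `coker d⁻¹` is projective. Hence `im d⁻¹` has a
complement `K`, which maps isomorphically onto `coker d⁻¹` and so injects into `P¹` under `d⁰`;
both summands are finite projective, hence free, over the local ring `A`.
-/

theorem LinearMap.lTensor_liftQ_range_injective {R M N P : Type*} (Q : Type*) [CommRing R]
    [AddCommGroup M] [Module R M] [AddCommGroup N] [Module R N] [AddCommGroup P] [Module R P]
    [AddCommGroup Q] [Module R Q] (f : M →ₗ[R] N) (g : N →ₗ[R] P)
    (hfg : range f ≤ ker g) (h : ker (g.lTensor Q) ≤ range (f.lTensor Q)) :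
    Function.Injective (((range f).liftQ g hfg).lTensor Q) := by
  rw [injective_iff_map_eq_zero]
  intro x hx
  obtain ⟨y, rfl⟩ := lTensor_surjective Q (range f).mkQ_surjective x
  have hy : g.lTensor Q y = 0 := by
    rwa [← (range f).liftQ_mkQ g hfg, lTensor_comp, comp_apply]
  obtain ⟨z, rfl⟩ := h hy
  rw [← comp_apply, ← lTensor_comp, f.exact_map_mkQ_range.linearMap_comp_eq_zero,
    lTensor_zero, zero_apply]

theorem Submodule.exists_isCompl_of_projective_quotient {R M : Type*} [Ring R] [AddCommGroup M]
    [Module R M] (p : Submodule R M) [Module.Projective R (M ⧸ p)] :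
    ∃ q : Submodule R M, IsCompl p q := by
  obtain ⟨s, hs⟩ := Module.projective_lifting_property p.mkQ LinearMap.id p.mkQ_surjective
  have hs_inj : Function.Injective s :=
    Function.HasLeftInverse.injective ⟨p.mkQ, LinearMap.congr_fun hs⟩
  have hidem : IsIdempotentElem (s ∘ₗ p.mkQ) := by
    rw [IsIdempotentElem, Module.End.mul_eq_comp, LinearMap.comp_assoc,
      ← LinearMap.comp_assoc p.mkQ, hs, LinearMap.id_comp]
  have hker : LinearMap.ker (s ∘ₗ p.mkQ) = p := by
    rw [LinearMap.ker_comp, LinearMap.ker_eq_bot.mpr hs_inj, Submodule.comap_bot, p.ker_mkQ]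
  exact ⟨_, hker ▸ (LinearMap.IsIdempotentElem.isCompl hidem).symm⟩

theorem Submodule.free_finite_of_isCompl {R M : Type*} [CommRing R] [IsLocalRing R]
    [AddCommGroup M] [Module R M] [Module.Projective R M] [Module.Finite R M]
    {p q : Submodule R M} (h : IsCompl p q) : Module.Free R p ∧ Module.Finite R p := by
  have : Module.Finite R p := .equiv (q.quotientEquivOfIsCompl p h.symm)
  have : Module.Projective R p :=
    .of_split p.subtype (p.projectionOnto q h) (by ext; simp)
  exact ⟨Module.free_of_flat_of_isLocalRing, inferInstance⟩

theorem stmt0_general {A : Type*} [CommRing A] [IsLocalRing A]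
    {Pneg P0 P1 : Type*}
    [AddCommGroup Pneg] [Module A Pneg]
    [AddCommGroup P0] [Module A P0] [Module.Free A P0] [Module.Finite A P0]
    [AddCommGroup P1] [Module A P1] [Module.Free A P1] [Module.Finite A P1]
    (dneg : Pneg →ₗ[A] P0) (d0 : P0 →ₗ[A] P1)
    (hcomplex : d0 ∘ₗ dneg = 0)
    (hH0 : ∀ x ∈ LinearMap.ker
        (LinearMap.baseChange (IsLocalRing.ResidueField A) d0),
      x ∈ LinearMap.range
        (LinearMap.baseChange (IsLocalRing.ResidueField A) dneg)) :
    ∃ I K : Submodule A P0, IsCompl I K ∧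
      Module.Free A I ∧ Module.Finite A I ∧
      Module.Free A K ∧ Module.Finite A K ∧
      LinearMap.range dneg = I ∧
      (∀ x ∈ K, d0 x = 0 → x = 0) := by
  set J := LinearMap.range dneg
  have hJ : J ≤ LinearMap.ker d0 := LinearMap.range_le_ker_iff.mpr hcomplex
  -- `hH0` is accepted as is: `baseChange k` and `lTensor k` agree definitionally.
  obtain ⟨f', hf'⟩ := (IsLocalRing.split_injective_iff_lTensor_residueField_injective
    (J.liftQ d0 hJ)).mpr (dneg.lTensor_liftQ_range_injective _ d0 hJ hH0)
  have : Module.Projective A (P0 ⧸ J) := .of_split _ f' hf'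
  obtain ⟨K, hJK⟩ := J.exists_isCompl_of_projective_quotient
  obtain ⟨hJfree, hJfin⟩ := Submodule.free_finite_of_isCompl hJK
  obtain ⟨hKfree, hKfin⟩ := Submodule.free_finite_of_isCompl hJK.symm
  refine ⟨J, K, hJK, hJfree, hJfin, hKfree, hKfin, rfl, fun x hxK hx ↦ ?_⟩
  have hinj : Function.Injective (J.liftQ d0 hJ) :=
    Function.HasLeftInverse.injective ⟨f', LinearMap.congr_fun hf'⟩
  have hxJ : x ∈ J := by
    rw [← J.ker_mkQ, LinearMap.mem_ker]
    exact hinj (by simpa using hx)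
  exact (Submodule.disjoint_def.mp hJK.disjoint) x hxJ hxK

/-- Let `A` be a local ring with residue field `k` and
`P⁻¹ → P⁰ → P¹` a complex of finite free `A`-modules whose middle cohomology
vanishes after base change to `k`.  Then `P⁰` decomposes as a direct sum
`I ⊕ K` of finite free submodules such that `P⁻¹ → P⁰` factors through a
surjection onto `I` (i.e. `I` is the image of `d⁻¹`) and `P⁰ → P¹` restricts
to an injection on `K`. -/
theorem stmt0 {A : Type*} [CommRing A] [IsLocalRing A]
    {Pneg P0 P1 : Type*}
    [AddCommGroup Pneg] [Module A Pneg] [Module.Free A Pneg] [Module.Finite A Pneg]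
    [AddCommGroup P0] [Module A P0] [Module.Free A P0] [Module.Finite A P0]
    [AddCommGroup P1] [Module A P1] [Module.Free A P1] [Module.Finite A P1]
    (dneg : Pneg →ₗ[A] P0) (d0 : P0 →ₗ[A] P1)
    (hcomplex : d0 ∘ₗ dneg = 0)
    (hH0 : ∀ x ∈ LinearMap.ker
        (LinearMap.baseChange (IsLocalRing.ResidueField A) d0),
      x ∈ LinearMap.range
        (LinearMap.baseChange (IsLocalRing.ResidueField A) dneg)) :
    ∃ I K : Submodule A P0, IsCompl I K ∧
      Module.Free A I ∧ Module.Finite A I ∧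
      Module.Free A K ∧ Module.Finite A K ∧
      LinearMap.range dneg = I ∧
      (∀ x ∈ K, d0 x = 0 → x = 0) :=
  stmt0_general dneg d0 hcomplex hH0
end

section
/- Let 0 → I → A → A₀ → 0 be a square-zero extension of rings, B a flat A-algebra, and set B₀ = B ⊗_A A₀. Then for any B₀-module F, there is a natural isomorphism Tor₁^B(F, B₀) ≅ I ⊗_{A₀} F. -/
/-!
Resolve `B/J` by projectives starting with `B ← P₁`, where `P₁ ↠ J ↪ B`. Since `J` kills `F`,
the differential `F ⊗ P₁ → F ⊗ B` vanishes, so `Tor₁(F, B/J)` is the cokernel of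
`F ⊗ P₂ → F ⊗ P₁`, which is `F ⊗_B J` by right exactness of `F ⊗ -`. Flatness of `B` over `A`
identifies `J = IB` with `B ⊗_A I`, and `F ⊗_B (B ⊗_A I) ≅ F ⊗_A I`.
-/

open CategoryTheory Limits Projective TensorProduct

universe v u

section Resolution

variable {C : Type u} [Category.{v} C] [Abelian C]

namespace CategoryTheory.ProjectiveResolution

variable {Z X : C} (P : ProjectiveResolution Z) (q : P.complex.X 1 ⟶ X) (i : X ⟶ P.complex.X 0)
  [hi : Mono i]

lemma complex_d_two_one_comp_eq_zero (hqi : q ≫ i = P.complex.d 1 0) :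
    P.complex.d 2 1 ≫ q = 0 := by
  rw [← cancel_mono i, Category.assoc, hqi, HomologicalComplex.d_comp_d, zero_comp]

noncomputable def isColimitCokernelCoforkOfFactorization [Epi q]
    (hqi : q ≫ i = P.complex.d 1 0) :
    IsColimit (CokernelCofork.ofπ q (P.complex_d_two_one_comp_eq_zero q i hqi)) :=
  let φ : ShortComplex.mk _ _ (P.complex_d_two_one_comp_eq_zero q i hqi) ⟶
      ShortComplex.mk _ _ (P.complex.d_comp_d 2 1 0) :=
    { τ₁ := 𝟙 _, τ₂ := 𝟙 _, τ₃ := i }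
  ((ShortComplex.exact_iff_of_epi_of_isIso_of_mono φ).2 (P.exact_succ 0)).gIsCokernel

variable [HasProjectiveResolutions C] {D : Type*} [Category D] [Abelian D] (G : C ⥤ D)
  [G.Additive] [PreservesFiniteColimits G]

noncomputable def leftDerivedOneIsoOfFactorization [hq : Epi q]
    (hqi : q ≫ i = P.complex.d 1 0) (hG : G.map i = 0) :
    (G.leftDerived 1).obj Z ≅ G.obj X :=
  let K := (G.mapHomologicalComplex _).obj P.complex
  have hg : (K.sc' 2 1 0).g = 0 := by
    change G.map (P.complex.d 1 0) = 0
    rw [← hqi, G.map_comp, hG, comp_zero]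
  P.isoLeftDerivedObj G 1 ≪≫ K.homologyIsoSc' 2 1 0 (by simp) (by simp) ≪≫
    (ShortComplex.HomologyData.ofIsColimitCokernelCofork _ hg _
      (isColimitCoforkMapOfIsColimit' G _
        (P.isColimitCokernelCoforkOfFactorization q i hqi))).left.homologyIso

end CategoryTheory.ProjectiveResolution

variable [EnoughProjectives C]

lemma CategoryTheory.Projective.d_comp_self {X Y : C} (f : X ⟶ Y) : Projective.d f ≫ f = 0 :=
  (Category.assoc _ _ _).trans (by rw [kernel.condition]; exact comp_zero)

namespace CategoryTheory.ProjectiveResolution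

noncomputable def syzygyStep {X Y : C} (f : X ⟶ Y) : Σ' (K : C) (d : K ⟶ X), d ≫ f = 0 :=
  ⟨syzygies f, Projective.d f, Projective.d_comp_self f⟩

variable {Z X₀ X₁ : C} (d₀ : X₁ ⟶ X₀)

noncomputable def ofPresentationComplex : ChainComplex C ℕ :=
  ChainComplex.mk' X₀ X₁ d₀ syzygyStep

@[simp] lemma ofPresentationComplex_d_1_0 : (ofPresentationComplex d₀).d 1 0 = d₀ := by
  simp [ofPresentationComplex]

lemma ofPresentationComplex_exactAt_succ (n : ℕ) :
    (ofPresentationComplex d₀).ExactAt (n + 1) := by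
  rw [HomologicalComplex.exactAt_iff' _ (n + 2) (n + 1) n (by simp) (by simp)]
  refine ShortComplex.exact_of_iso ?_ (exact_d_f ((ofPresentationComplex d₀).d (n + 1) n))
  refine ShortComplex.isoMk (ChainComplex.mk'XIso X₀ X₁ d₀ syzygyStep n).symm
    (Iso.refl _) (Iso.refl _) ?_ ?_
  · exact (Iso.inv_comp_eq _).2 ((ChainComplex.mk'_d X₀ X₁ d₀ syzygyStep n).trans
      (congrArg _ (Category.comp_id _).symm))
  · exact (Category.id_comp _).trans (Category.comp_id _).symm

instance [Projective X₀] [Projective X₁] (n : ℕ) :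
    Projective ((ofPresentationComplex d₀).X n) := by
  obtain (_ | _ | _ | n) := n
  · assumption
  · assumption
  all_goals apply Projective.projective_over

noncomputable def ofPresentation [Projective X₀] [Projective X₁] (π₀ : X₀ ⟶ Z) [Epi π₀]
    (w : d₀ ≫ π₀ = 0) (hex : (ShortComplex.mk d₀ π₀ w).Exact) : ProjectiveResolution Z where
  complex := ofPresentationComplex d₀
  π := (ChainComplex.toSingle₀Equiv _ _).symm ⟨π₀, by rw [ofPresentationComplex_d_1_0]; exact w⟩
  quasiIso := ⟨fun n => by
    cases n with
    | zero =>
      rw [ChainComplex.quasiIsoAt₀_iff, ShortComplex.quasiIso_iff_of_zeros']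
      · refine (ShortComplex.exact_and_epi_g_iff_of_iso ?_).2 ⟨hex, inferInstance⟩
        exact ShortComplex.isoMk (Iso.refl _) (Iso.refl _) (Iso.refl _)
          ((Category.id_comp _).trans
            ((ofPresentationComplex_d_1_0 d₀).symm.trans (Category.comp_id _).symm))
          ((Category.id_comp _).trans ((ChainComplex.toSingle₀Equiv_symm_apply_f_zero
            (C := ofPresentationComplex d₀) π₀ _).symm.trans (Category.comp_id _).symm))
      all_goals rfl
    | succ n =>
      rw [quasiIsoAt_iff_exactAt']
      · exact ofPresentationComplex_exactAt_succ d₀ n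
      · exact ChainComplex.exactAt_succ_single_obj _ _⟩

end CategoryTheory.ProjectiveResolution

lemma CategoryTheory.ShortComplex.ShortExact.exact_π_comp_f {S : ShortComplex C}
    (hS : S.ShortExact) :
    (ShortComplex.mk (Projective.π S.X₁ ≫ S.f) S.g (by simp)).Exact := by
  let φ : ShortComplex.mk (Projective.π S.X₁ ≫ S.f) S.g (by simp) ⟶ S :=
    { τ₁ := Projective.π S.X₁, τ₂ := 𝟙 _, τ₃ := 𝟙 _ }
  exact (ShortComplex.exact_iff_of_epi_of_isIso_of_mono φ).2 hS.exact

noncomputable def CategoryTheory.Functor.leftDerivedOneIsoOfShortExact {D : Type*} [Category D]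
    [Abelian D] (G : C ⥤ D) [G.Additive] [PreservesFiniteColimits G] {S : ShortComplex C}
    (hS : S.ShortExact) [Projective S.X₂] (hG : G.map S.f = 0) :
    (G.leftDerived 1).obj S.X₃ ≅ G.obj S.X₁ :=
  have := hS.epi_g
  (ProjectiveResolution.ofPresentation _ S.g _ hS.exact_π_comp_f).leftDerivedOneIsoOfFactorization
    (Projective.π S.X₁) S.f G (ProjectiveResolution.ofPresentationComplex_d_1_0 _).symm hG
    (hi := hS.mono_f) (hq := Projective.π_epi _)

end Resolution

section Tensor

variable {A B : Type*} [CommRing A] [CommRing B] [Algebra A B]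

noncomputable def Ideal.mulMap (I : Ideal A) : B ⊗[A] I →ₗ[B] B :=
  AlgebraTensorModule.rid A B B ∘ₗ AlgebraTensorModule.lTensor B B I.subtype

@[simp] lemma Ideal.mulMap_tmul (I : Ideal A) (b : B) (i : I) :
    I.mulMap (b ⊗ₜ i) = (i : A) • b :=
  rfl

lemma Ideal.mulMap_injective [Module.Flat A B] (I : Ideal A) :
    Function.Injective (I.mulMap (B := B)) := by
  refine (AlgebraTensorModule.rid A B B).injective.comp ?_
  rw [AlgebraTensorModule.coe_lTensor]
  exact Module.Flat.lTensor_preserves_injective_linearMap I.subtype I.injective_subtype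

lemma Ideal.range_mulMap (I : Ideal A) :
    LinearMap.range (I.mulMap (B := B)) = I.map (algebraMap A B) := by
  apply le_antisymm
  · rintro _ ⟨x, rfl⟩
    induction x using TensorProduct.induction_on with
    | zero => simp
    | tmul b i =>
      simpa [Algebra.smul_def] using Ideal.mul_mem_right b _ (Ideal.mem_map_of_mem _ i.2)
    | add x y hx hy => rw [map_add]; exact add_mem hx hy
  · rw [Ideal.map_le_iff_le_comap]
    exact fun i hi => ⟨1 ⊗ₜ ⟨i, hi⟩, by simp [Algebra.smul_def]⟩

noncomputable def Ideal.tensorEquivMap [Module.Flat A B] (I : Ideal A) :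
    B ⊗[A] I ≃ₗ[B] I.map (algebraMap A B) :=
  (LinearEquiv.ofInjective _ I.mulMap_injective).trans (LinearEquiv.ofEq _ _ I.range_mulMap)

noncomputable def Ideal.tensorMapEquivTensor [Module.Flat A B] (I : Ideal A) (F : Type*)
    [AddCommGroup F] [Module B F] [Module A F] [IsScalarTower A B F] :
    F ⊗[B] I.map (algebraMap A B) ≃ₗ[B] F ⊗[A] I :=
  (TensorProduct.congr (LinearEquiv.refl B F) I.tensorEquivMap.symm).trans
    (AlgebraTensorModule.cancelBaseChange A B B F I)

end Tensor

section ModuleCat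

variable {B : Type u} [CommRing B] (J : Ideal B)

lemma Ideal.shortExact_subtype_mkQ :
    (ShortComplex.mk (ModuleCat.ofHom J.subtype) (ModuleCat.ofHom J.mkQ)
      (by ext x; exact (Submodule.Quotient.mk_eq_zero J).2 x.2)).ShortExact :=
  ModuleCat.shortComplex_shortExact _ (LinearMap.exact_subtype_mkQ J) J.injective_subtype
    J.mkQ_surjective

lemma ModuleCat.tensorLeft_map_subtype_eq_zero {F : Type u} [AddCommGroup F] [Module B F]
    (hF : ∀ x ∈ J, ∀ f : F, x • f = 0) :
    (MonoidalCategory.tensorLeft (ModuleCat.of B F)).map (ModuleCat.ofHom J.subtype) = 0 := by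
  refine ModuleCat.hom_ext (TensorProduct.ext' fun f x => ?_)
  change f ⊗ₜ[B] (x : B) = 0
  rw [← mul_one (x : B), ← smul_eq_mul, ← smul_tmul, hF x x.2 f, zero_tmul]

end ModuleCat

theorem stmt3_general {A B : Type u} [CommRing A] [CommRing B]
    [Algebra A B] [Module.Flat A B]
    (I : Ideal A)
    (J : Ideal B) (hJdef : J = I.map (algebraMap A B))
    (F : Type u) [AddCommGroup F] [Module B F] [Module A F] [IsScalarTower A B F]
    (hF : ∀ x ∈ J, ∀ f : F, x • f = 0) :
    Nonempty
      ((((Tor (ModuleCat.{u} B) 1).obj (ModuleCat.of B F)).obj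
          (ModuleCat.of B (B ⧸ J))) ≅
        ModuleCat.of B (TensorProduct A F ↥I)) := by
  subst hJdef
  exact ⟨((MonoidalCategory.tensoringLeft _).obj (ModuleCat.of B F)).leftDerivedOneIsoOfShortExact
      (Ideal.shortExact_subtype_mkQ _) (ModuleCat.tensorLeft_map_subtype_eq_zero _ hF) ≪≫
    (I.tensorMapEquivTensor F).toModuleIso⟩

/-- Let `0 → I → A → A₀ → 0` be a square-zero extension of
rings, `B` a flat `A`-algebra, and `B₀ = B ⊗_A A₀ = B/IB`.  Then for any
`B₀`-module `F` (i.e. a `B`-module killed by `J = IB`) there is a natural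
isomorphism `Tor₁^B(F, B₀) ≅ I ⊗_{A₀} F` (the latter canonically identified
with `F ⊗_A I`, since `F` is killed by `I`). -/
theorem stmt3 {A A₀ B : Type u} [CommRing A] [CommRing A₀] [CommRing B]
    [Algebra A A₀] [Algebra A B] [Module.Flat A B]
    (hsurj : Function.Surjective (algebraMap A A₀))
    (I : Ideal A) (hIdef : I = RingHom.ker (algebraMap A A₀)) (hI2 : I * I = ⊥)
    (J : Ideal B) (hJdef : J = I.map (algebraMap A B))
    (F : Type u) [AddCommGroup F] [Module B F] [Module A F] [IsScalarTower A B F]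
    (hF : ∀ x ∈ J, ∀ f : F, x • f = 0) :
    Nonempty
      ((((Tor (ModuleCat.{u} B) 1).obj (ModuleCat.of B F)).obj
          (ModuleCat.of B (B ⧸ J))) ≅
        ModuleCat.of B (TensorProduct A F ↥I)) :=
  stmt3_general I J hJdef F hF
end

section
/- Let A be a local Artinian ring with residue field k. Suppose J^{-1} → J^0 → J^1 is an exact sequence of flat A-modules such that H^0(J ⊗_A k) = 0 (cohomology at the middle spot of the reduction vanishes). Then for every A-module M, H^0(J ⊗_A M) = 0. -/
/-!
Over the residue field `k` every module is `k ⊗_A F` with `F` free over `A`, so exactness of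
`J ⊗ k` propagates, by flatness of `F`, to `J ⊗ M` for every `k`-vector space `M`. The class of
`M` for which `J ⊗ M` is exact in the middle is closed under extensions `0 → M' → M → M'' → 0`:
in the diagram chase, injectivity of `J¹ ⊗ M' → J¹ ⊗ M` (flatness of `J¹`) is what lets a
correction term in `J⁰ ⊗ M'` be seen to be a cycle. A module killed by `𝔪ⁿ` is an iterated
extension of `k`-vector spaces (filter by `𝔪ⁱ M`), and over an Artinian local ring `𝔪` is
nilpotent.
-/

open LinearMap TensorProduct IsLocalRing

theorem LinearMap.rTensor_lTensor_comm_apply {R M N P Q : Type*} [CommSemiring R]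
    [AddCommMonoid M] [Module R M] [AddCommMonoid N] [Module R N] [AddCommMonoid P] [Module R P]
    [AddCommMonoid Q] [Module R Q] (f : M →ₗ[R] P) (g : N →ₗ[R] Q) (x : M ⊗[R] N) :
    f.rTensor Q (g.lTensor M x) = g.lTensor P (f.rTensor N x) := by
  rw [← comp_apply, rTensor_comp_lTensor, ← lTensor_comp_rTensor, comp_apply]

section

variable {A : Type*} [CommRing A] {X Y Z : Type*}
  [AddCommGroup X] [Module A X] [AddCommGroup Y] [Module A Y] [AddCommGroup Z] [Module A Z]
  {f : X →ₗ[A] Y} {g : Y →ₗ[A] Z}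

theorem LinearMap.rTensor_comp_rTensor_eq_zero (M : Type*) [AddCommGroup M] [Module A M]
    (hfg : g ∘ₗ f = 0) : g.rTensor M ∘ₗ f.rTensor M = 0 := by
  rw [← rTensor_comp, hfg, rTensor_zero]

theorem Function.Exact.rTensor_of_linearEquiv {M M' : Type*} [AddCommGroup M] [Module A M]
    [AddCommGroup M'] [Module A M'] (h : Function.Exact (f.rTensor M) (g.rTensor M))
    (e : M ≃ₗ[A] M') : Function.Exact (f.rTensor M') (g.rTensor M') :=
  h.of_ladder_linearEquiv_of_exact (e₁ := e.lTensor X) (e₂ := e.lTensor Y) (e₃ := e.lTensor Z)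
    (by ext; simp) (by ext; simp)

theorem Function.Exact.rTensor_tensor_of_flat {M F : Type*} [AddCommGroup M] [Module A M]
    [AddCommGroup F] [Module A F] [Module.Flat A F]
    (h : Function.Exact (f.rTensor M) (g.rTensor M)) :
    Function.Exact (f.rTensor (M ⊗[A] F)) (g.rTensor (M ⊗[A] F)) :=
  (Module.Flat.rTensor_exact F h).of_ladder_linearEquiv_of_exact
    (e₁ := TensorProduct.assoc A X M F) (e₂ := TensorProduct.assoc A Y M F)
    (e₃ := TensorProduct.assoc A Z M F) (by rw [rTensor_tensor]; ext; simp)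
    (by rw [rTensor_tensor]; ext; simp)

theorem Function.Exact.rTensor_of_vectorSpace {K M : Type*} [Field K] [Algebra A K]
    [AddCommGroup M] [Module K M] [Module A M] [IsScalarTower A K M]
    (h : Function.Exact (f.rTensor K) (g.rTensor K)) :
    Function.Exact (f.rTensor M) (g.rTensor M) := by
  classical
  let b := Module.Basis.ofVectorSpace K M
  exact h.rTensor_tensor_of_flat.rTensor_of_linearEquiv
    (finsuppScalarRight A A K _ ≪≫ₗ (b.repr.restrictScalars A).symm)

theorem Function.Exact.rTensor_of_extension [Module.Flat A Z] (hfg : g ∘ₗ f = 0)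
    {M' M M'' : Type*} [AddCommGroup M'] [Module A M'] [AddCommGroup M] [Module A M]
    [AddCommGroup M''] [Module A M''] {i : M' →ₗ[A] M} {p : M →ₗ[A] M''}
    (hi : Function.Injective i) (hp : Function.Surjective p) (hip : Function.Exact i p)
    (h' : Function.Exact (f.rTensor M') (g.rTensor M'))
    (h'' : Function.Exact (f.rTensor M'') (g.rTensor M'')) :
    Function.Exact (f.rTensor M) (g.rTensor M) := by
  refine .of_comp_of_mem_range (congrArg DFunLike.coe (rTensor_comp_rTensor_eq_zero M hfg))
    fun x hx => ?_
  obtain ⟨y, hy⟩ := (h'' (p.lTensor Y x)).mp (by rw [rTensor_lTensor_comm_apply, hx, map_zero])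
  obtain ⟨y, rfl⟩ := lTensor_surjective X hp y
  obtain ⟨w, hw⟩ := (lTensor_exact Y hip hp (x - f.rTensor M y)).mp
    (by rw [map_sub, ← rTensor_lTensor_comm_apply, hy, sub_self])
  have hgw : g.rTensor M' w = 0 := by
    apply Module.Flat.lTensor_preserves_injective_linearMap i hi
    rw [map_zero, ← rTensor_lTensor_comm_apply, hw, map_sub, hx, ← LinearMap.comp_apply,
      rTensor_comp_rTensor_eq_zero M hfg, LinearMap.zero_apply, sub_zero]
  obtain ⟨v, hv⟩ := (h' w).mp hgw
  exact ⟨y + i.lTensor X v, by rw [map_add, rTensor_lTensor_comm_apply, hv, hw, add_sub_cancel]⟩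

theorem Function.Exact.rTensor_of_pow_maximalIdeal_smul_top_eq_bot [IsLocalRing A]
    [Module.Flat A Z] (hfg : g ∘ₗ f = 0)
    (hk : Function.Exact (f.rTensor (ResidueField A)) (g.rTensor (ResidueField A))) (n : ℕ)
    {M : Type*} [AddCommGroup M] [Module A M]
    (hM : maximalIdeal A ^ n • (⊤ : Submodule A M) = ⊥) :
    Function.Exact (f.rTensor M) (g.rTensor M) := by
  induction n generalizing M with
  | zero =>
    have : Subsingleton M := by
      rw [pow_zero, Ideal.one_eq_top, Submodule.top_smul] at hM
      exact (Submodule.subsingleton_iff A).mp (subsingleton_of_top_eq_bot hM)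
    exact fun _ => ⟨fun _ => ⟨0, Subsingleton.elim _ _⟩, fun _ => Subsingleton.elim _ _⟩
  | succ n ih =>
    let N : Submodule A M := maximalIdeal A • ⊤
    have hN : maximalIdeal A ^ n • (⊤ : Submodule A N) = ⊥ := by
      apply Submodule.map_injective_of_injective N.injective_subtype
      rw [Submodule.map_smul'', Submodule.map_subtype_top, Submodule.map_bot,
        ← Submodule.mul_smul, ← pow_succ, hM]
    let : Module (ResidueField A) (M ⧸ N) :=
      (Module.isTorsionBySet_quotient_ideal_smul M _).module
    have : IsScalarTower A (ResidueField A) (M ⧸ N) :=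
      (Module.isTorsionBySet_quotient_ideal_smul M _).isScalarTower
    exact rTensor_of_extension hfg N.injective_subtype N.mkQ_surjective
      (LinearMap.exact_subtype_mkQ N) (ih hN) hk.rTensor_of_vectorSpace

end

universe u

theorem stmt4_general {A : Type u} [CommRing A] [IsLocalRing A] [IsArtinianRing A]
    {Jneg J0 J1 : Type u}
    [AddCommGroup Jneg] [Module A Jneg]
    [AddCommGroup J0] [Module A J0]
    [AddCommGroup J1] [Module A J1] [Module.Flat A J1]
    (dneg : Jneg →ₗ[A] J0) (d0 : J0 →ₗ[A] J1)
    (hcomplex : d0 ∘ₗ dneg = 0)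
    (hk : ∀ x ∈ LinearMap.ker (LinearMap.rTensor (IsLocalRing.ResidueField A) d0),
      x ∈ LinearMap.range (LinearMap.rTensor (IsLocalRing.ResidueField A) dneg)) :
    ∀ (M : Type u) [AddCommGroup M] [Module A M],
      ∀ x ∈ LinearMap.ker (LinearMap.rTensor M d0),
        x ∈ LinearMap.range (LinearMap.rTensor M dneg) := by
  intro M _ _ x hx
  have hexact : Function.Exact (dneg.rTensor (ResidueField A)) (d0.rTensor (ResidueField A)) :=
    LinearMap.exact_iff.mpr
      (le_antisymm hk (range_le_ker_iff.mpr (rTensor_comp_rTensor_eq_zero _ hcomplex)))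
  obtain ⟨n, hn⟩ := (isArtinianRing_iff_isNilpotent_maximalIdeal A).mp ‹_›
  have hM : maximalIdeal A ^ n • (⊤ : Submodule A M) = ⊥ := by
    rw [hn, Ideal.zero_eq_bot, Submodule.bot_smul]
  exact (hexact.rTensor_of_pow_maximalIdeal_smul_top_eq_bot hcomplex n hM x).mp hx

/-- Let `A` be a local Artinian ring with residue field `k`,
and `J⁻¹ → J⁰ → J¹` a complex of flat `A`-modules whose middle cohomology
vanishes after tensoring with `k`.  Then for every `A`-module `M` the middle
cohomology of `J ⊗ M` vanishes. -/
theorem stmt4 {A : Type u} [CommRing A] [IsLocalRing A] [IsArtinianRing A]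
    {Jneg J0 J1 : Type u}
    [AddCommGroup Jneg] [Module A Jneg] [Module.Flat A Jneg]
    [AddCommGroup J0] [Module A J0] [Module.Flat A J0]
    [AddCommGroup J1] [Module A J1] [Module.Flat A J1]
    (dneg : Jneg →ₗ[A] J0) (d0 : J0 →ₗ[A] J1)
    (hcomplex : d0 ∘ₗ dneg = 0)
    (hk : ∀ x ∈ LinearMap.ker (LinearMap.rTensor (IsLocalRing.ResidueField A) d0),
      x ∈ LinearMap.range (LinearMap.rTensor (IsLocalRing.ResidueField A) dneg)) :
    ∀ (M : Type u) [AddCommGroup M] [Module A M],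
      ∀ x ∈ LinearMap.ker (LinearMap.rTensor M d0),
        x ∈ LinearMap.range (LinearMap.rTensor M dneg) :=
  stmt4_general dneg d0 hcomplex hk
end

section
/- Let A be a Noetherian ring, m ⊂ A an ideal, and (M_i) an inverse system of modules with M_i a module over A_i = A/m^{i+1}, equipped with isomorphisms M_i ⊗_{A_i} A_j ≅ M_j for all j ≤ i (compatible with the transition maps). Let M = lim← M_i. Then for each i, the natural map M ⊗_A A_i → M_i is an isomorphism. -/
/-!
Surjectivity of `invLimit f → M i` comes from lifting step by step along the surjective
transition maps. For the kernel, let `s` be a finite set generating `m ^ (i + 1)` and `y` a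
compatible sequence with `y i = 0`. Since `ker (M (i + k + 1) → M (i + k))` is
`m ^ (i + 1) • m ^ k • M (i + k + 1)`, one can write `y (i + k) = ∑ a ∈ s, a • v k a` with
`v (k + 1)` lifting `v k` modulo `m ^ k`. As `m ^ (j + 1)` kills `M j`, the images of the
`v (j + 1) a` in `M j` form compatible sequences `z a`, and `y = ∑ a ∈ s, a • z a`.
-/

/-- The inverse limit of an `ℕ`-indexed system of modules with transition maps
`f i : M (i+1) → M i`, realized as the submodule of compatible sequences in the
product. -/
def invLimit {R : Type*} [CommRing R] {M : ℕ → Type*}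
    [∀ i, AddCommGroup (M i)] [∀ i, Module R (M i)]
    (f : ∀ i, M (i + 1) →ₗ[R] M i) : Submodule R (∀ i, M i) where
  carrier := {x | ∀ i, f i (x (i + 1)) = x i}
  add_mem' := by intro a b ha hb i; simp [ha i, hb i]
  zero_mem' := by intro i; simp
  smul_mem' := by intro c a ha i; simp [ha i]

section

variable {A : Type*} [CommRing A]

lemma Submodule.exists_sum_smul_of_mem_span_smul {P : Type*} [AddCommGroup P] [Module A P]
    {s : Finset A} {N : Submodule A P} {x : P} (hx : x ∈ Ideal.span (s : Set A) • N) :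
    ∃ u : A → P, (∀ a, u a ∈ N) ∧ x = ∑ a ∈ s, a • u a := by
  rw [Submodule.span_smul_eq, Submodule.mem_set_smul] at hx
  obtain ⟨c, hc, rfl⟩ := hx
  refine ⟨fun a ↦ c a, fun a ↦ (c a).2, ?_⟩
  rw [Finsupp.sum_of_support_subset c hc _ fun _ _ ↦ by simp]
  simp

lemma LinearMap.exists_sum_smul_lift {N P : Type*} [AddCommGroup N] [Module A N]
    [AddCommGroup P] [Module A P] (g : N →ₗ[A] P) (hg : Function.Surjective g)
    {s : Finset A} {J : Submodule A N} (hker : LinearMap.ker g ≤ Ideal.span (s : Set A) • J)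
    {y : N} {v : A → P} (hv : g y = ∑ a ∈ s, a • v a) :
    ∃ v' : A → N, y = ∑ a ∈ s, a • v' a ∧ ∀ a, g (v' a) - v a ∈ J.map g := by
  choose w hw using fun a ↦ hg (v a)
  have hd : y - ∑ a ∈ s, a • w a ∈ LinearMap.ker g := by
    simp [hv, hw]
  obtain ⟨u, hu, hdu⟩ := Submodule.exists_sum_smul_of_mem_span_smul (hker hd)
  refine ⟨w + u, ?_, fun a ↦ ?_⟩
  · simp only [Pi.add_apply, smul_add, Finset.sum_add_distrib, ← hdu]
    abel
  · convert Submodule.mem_map_of_mem (hu a) using 1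
    simp [hw]

lemma Submodule.eq_zero_of_mem_smul_top {P : Type*} [AddCommGroup P] [Module A P] {I : Ideal A}
    (hI : ∀ a ∈ I, ∀ x : P, a • x = 0) {x : P} (hx : x ∈ I • (⊤ : Submodule A P)) : x = 0 := by
  have hbot : I • (⊤ : Submodule A P) = ⊥ := Submodule.le_annihilator_iff.mp fun a ha ↦
    Submodule.mem_annihilator.mpr fun x _ ↦ hI a ha x
  simpa [hbot] using hx

variable {M : ℕ → Type*} [∀ i, AddCommGroup (M i)] [∀ i, Module A (M i)]
  (f : ∀ i, M (i + 1) →ₗ[A] M i)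

def transition {j k : ℕ} (h : j ≤ k) : M k →ₗ[A] M j :=
  Nat.leRecOn h (fun g ↦ g ∘ₗ f _) LinearMap.id

lemma transition_self {j : ℕ} (h : j ≤ j) : transition f h = LinearMap.id :=
  Nat.leRecOn_self _

lemma transition_succ {j k : ℕ} (h : j ≤ k) (h' : j ≤ k + 1) :
    transition f h' = transition f h ∘ₗ f k :=
  Nat.leRecOn_succ h _

lemma comp_transition {j k : ℕ} (h : j + 1 ≤ k) :
    f j ∘ₗ transition f h = transition f (j.le_succ.trans h) := by
  induction k, h using Nat.le_induction with
  | base => rw [transition_self, transition_succ f le_rfl, transition_self]; rfl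
  | succ k hk ih => rw [transition_succ f hk, transition_succ f (j.le_succ.trans hk), ← ih]; rfl

lemma transition_add_apply {i : ℕ} {w : ∀ k, M (i + k)} (hw : ∀ k, f (i + k) (w (k + 1)) = w k)
    (k : ℕ) (h : i ≤ i + k) : transition f h (w k) = w 0 := by
  induction k with
  | zero => rw [transition_self]; rfl
  | succ k ih => rw [transition_succ f (i.le_add_right k), LinearMap.comp_apply, hw, ih]

lemma transition_apply_of_mem_invLimit {y : ∀ j, M j} (hy : y ∈ invLimit f) {j k : ℕ}
    (h : j ≤ k) : transition f h (y k) = y j := by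
  obtain ⟨k, rfl⟩ := Nat.exists_eq_add_of_le h
  exact transition_add_apply f (w := fun k ↦ y (j + k)) (fun k ↦ hy (j + k)) k h

def diagonal {i : ℕ} (w : ∀ k, M (i + k)) (j : ℕ) : M j :=
  transition f (by omega : j ≤ i + (j + 1)) (w (j + 1))

lemma diagonal_mem_invLimit {i : ℕ} (w : ∀ k, M (i + k))
    (hw : ∀ j, transition f (by omega : j ≤ i + (j + 1)) (f (i + (j + 1)) (w (j + 2))) =
      transition f (by omega : j ≤ i + (j + 1)) (w (j + 1))) :
    diagonal f w ∈ invLimit f := by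
  intro j
  rw [diagonal, diagonal, ← LinearMap.comp_apply, comp_transition,
    transition_succ f (k := i + (j + 1)) (by omega), LinearMap.comp_apply, hw]

theorem proj_comp_subtype_invLimit_surjective (hsurj : ∀ i, Function.Surjective (f i)) (i : ℕ) :
    Function.Surjective (LinearMap.proj i ∘ₗ (invLimit f).subtype) := by
  intro x
  choose g hg using hsurj
  let w : ∀ k, M (i + k) := fun k ↦ Nat.rec (motive := fun k ↦ M (i + k)) x (fun k ↦ g (i + k)) k
  have hw : ∀ k, f (i + k) (w (k + 1)) = w k := fun k ↦ hg _ _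
  refine ⟨⟨diagonal f w, diagonal_mem_invLimit f w fun j ↦ by rw [hw]⟩, ?_⟩
  exact transition_add_apply f hw _ _

variable {f} {m : Ideal A}

lemma transition_apply_eq_of_sub_mem (htor : ∀ i, ∀ a ∈ m ^ (i + 1), ∀ x : M i, a • x = 0)
    {j k : ℕ} (h : j ≤ k) {x x' : M k} (hx : x - x' ∈ m ^ (j + 1) • (⊤ : Submodule A (M k))) :
    transition f h x = transition f h x' := by
  rw [← sub_eq_zero, ← map_sub]
  exact Submodule.eq_zero_of_mem_smul_top (htor j) (Submodule.smul_top_le_comap_smul_top _ _ hx)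

lemma exists_sum_smul_approx (hsurj : ∀ i, Function.Surjective (f i))
    (hker : ∀ i, LinearMap.ker (f i) = (m ^ (i + 1)) • (⊤ : Submodule A (M (i + 1))))
    {i : ℕ} {s : Finset A} (hs : Ideal.span (s : Set A) = m ^ (i + 1))
    {y : ∀ j, M j} (hy : y ∈ invLimit f) (hyi : y i = 0) :
    ∃ v : ∀ k, A → M (i + k), (∀ k, y (i + k) = ∑ a ∈ s, a • v k a) ∧
      ∀ k a, f (i + k) (v (k + 1) a) - v k a ∈ m ^ k • (⊤ : Submodule A (M (i + k))) := by
  have step : ∀ k (v : A → M (i + k)), y (i + k) = ∑ a ∈ s, a • v a →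
      ∃ v' : A → M (i + (k + 1)), y (i + (k + 1)) = ∑ a ∈ s, a • v' a ∧
        ∀ a, f (i + k) (v' a) - v a ∈ m ^ k • (⊤ : Submodule A (M (i + k))) := by
    intro k v hv
    have hker' : LinearMap.ker (f (i + k)) ≤ Ideal.span (s : Set A) • m ^ k • ⊤ := by
      rw [hker, hs, ← Submodule.mul_smul, ← pow_add, add_right_comm]
    obtain ⟨v', hv', hdiff⟩ := (f (i + k)).exists_sum_smul_lift (hsurj _) hker' (by rw [hy, hv])
    refine ⟨v', hv', fun a ↦ ?_⟩
    simpa [Submodule.map_smul'', LinearMap.range_eq_top.mpr (hsurj _)] using hdiff a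
  choose! next hnext using step
  let v : ∀ k, A → M (i + k) := fun k ↦ Nat.rec (motive := fun k ↦ A → M (i + k)) 0 next k
  have hv : ∀ k, y (i + k) = ∑ a ∈ s, a • v k a := by
    intro k
    induction k with
    | zero => simpa [v] using hyi
    | succ k ih => exact (hnext k _ ih).1
  exact ⟨v, hv, fun k ↦ (hnext k _ (hv k)).2⟩

theorem ker_proj_comp_subtype_invLimit_le (hm : m.FG)
    (htor : ∀ i, ∀ a ∈ m ^ (i + 1), ∀ x : M i, a • x = 0)
    (hsurj : ∀ i, Function.Surjective (f i))
    (hker : ∀ i, LinearMap.ker (f i) = (m ^ (i + 1)) • (⊤ : Submodule A (M (i + 1)))) (i : ℕ) :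
    LinearMap.ker (LinearMap.proj i ∘ₗ (invLimit f).subtype) ≤
      (m ^ (i + 1)) • (⊤ : Submodule A (invLimit f)) := by
  intro y hy
  obtain ⟨s, hs⟩ := hm.pow (n := i + 1)
  obtain ⟨v, hv, hdiff⟩ := exists_sum_smul_approx hsurj hker hs y.2 hy
  let z : A → invLimit f := fun a ↦ ⟨diagonal f (v · a), diagonal_mem_invLimit f _ fun j ↦
    transition_apply_eq_of_sub_mem htor _ (hdiff (j + 1) a)⟩
  have hyz : y = ∑ a ∈ s, a • z a := by
    ext j
    simp only [Submodule.coe_sum, Submodule.coe_smul, Finset.sum_apply, Pi.smul_apply, z,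
      diagonal, ← map_smul, ← map_sum, ← hv, transition_apply_of_mem_invLimit f y.2]
  rw [hyz]
  exact Submodule.sum_mem _ fun a ha ↦
    Submodule.smul_mem_smul (hs ▸ Ideal.subset_span ha) Submodule.mem_top

lemma pow_smul_top_le_ker_proj_comp_subtype_invLimit
    (htor : ∀ i, ∀ a ∈ m ^ (i + 1), ∀ x : M i, a • x = 0) (i : ℕ) :
    (m ^ (i + 1)) • (⊤ : Submodule A (invLimit f)) ≤
      LinearMap.ker (LinearMap.proj i ∘ₗ (invLimit f).subtype) :=
  Submodule.smul_le.mpr fun a ha y _ ↦ htor i a ha (y.1 i)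

end

/-- Let `A` be a Noetherian ring, `m ⊆ A` an ideal, and
`(M i)` an inverse system where `M i` is a module over `A/m^(i+1)` (i.e. it is
killed by `m^(i+1)`), with surjective transition maps `f i : M (i+1) → M i`
whose kernel is `m^(i+1) • M (i+1)` (so that `M (i+1) ⊗ A/m^(i+1) ≅ M i`).
Let `M = lim← M i`.  Then for each `i` the natural map `M ⊗ A/m^(i+1) → M i`
is an isomorphism: the projection `M → M i` is surjective with kernel
`m^(i+1) • M`. -/
theorem stmt6 {A : Type*} [CommRing A] [IsNoetherianRing A] (m : Ideal A)
    {M : ℕ → Type*} [∀ i, AddCommGroup (M i)] [∀ i, Module A (M i)]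
    (f : ∀ i, M (i + 1) →ₗ[A] M i)
    (htor : ∀ i, ∀ a ∈ m ^ (i + 1), ∀ x : M i, a • x = 0)
    (hsurj : ∀ i, Function.Surjective (f i))
    (hker : ∀ i, LinearMap.ker (f i) = (m ^ (i + 1)) • (⊤ : Submodule A (M (i + 1)))) :
    ∀ i, Function.Surjective ((LinearMap.proj i) ∘ₗ (invLimit f).subtype) ∧
      LinearMap.ker ((LinearMap.proj i) ∘ₗ (invLimit f).subtype) =
        (m ^ (i + 1)) • (⊤ : Submodule A ↥(invLimit f)) :=
  fun i ↦ ⟨proj_comp_subtype_invLimit_surjective f hsurj i,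
    (ker_proj_comp_subtype_invLimit_le (IsNoetherian.noetherian m) htor hsurj hker i).antisymm
      (pow_smul_top_le_ker_proj_comp_subtype_invLimit htor i)⟩
end

section
/- Let R be a discrete valuation ring and M a finitely generated R-module. If M is torsion-free then M is free. In particular, if E and F are complexes on a proper flat R-scheme such that H^{-1} of the derived pushforward of RHom(E,F) vanishes after base change to the residue field, then Ext^0(E,F) = H^0(Rf_* RHom(E,F)) is a finite free R-module. -/
/-!
Finitely generated torsion-free modules over a principal ideal domain are free, and `H⁰` is
finitely generated because `R` is noetherian, so it remains to see that `H⁰` is torsion-free, i.e.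
that `range b` is saturated in `C0` with respect to a uniformizer `π`. If `b y = π • x`, then
`1 ⊗ y` lies in `ker (b ⊗ k) = range (a ⊗ k)`, so `y = a z + π • u`; applying `b` and cancelling
`π` in the free module `C0` gives `x = b u`.
-/

open TensorProduct LinearMap

namespace LinearMap

variable {R A B C : Type*} [CommRing R] [AddCommGroup A] [Module R A] [AddCommGroup B]
  [Module R B] [AddCommGroup C] [Module R C]

theorem exists_sub_mem_smul_top_of_ker_baseChange_le_range {I : Ideal R} {a : A →ₗ[R] B}
    {b : B →ₗ[R] C} (hab : ker (b.baseChange (R ⧸ I)) ≤ range (a.baseChange (R ⧸ I))) {y : B}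
    (hy : b y ∈ I • (⊤ : Submodule R C)) : ∃ z, y - a z ∈ I • (⊤ : Submodule R B) := by
  have hker : (1 : R ⧸ I) ⊗ₜ[R] y ∈ ker (b.baseChange (R ⧸ I)) := by
    apply (quotTensorEquivQuotSMul C I).injective
    simpa [Submodule.Quotient.mk_eq_zero] using hy
  obtain ⟨v, hv⟩ := hab hker
  obtain ⟨z, hz⟩ := Submodule.Quotient.mk_surjective _ (quotTensorEquivQuotSMul A I v)
  refine ⟨z, ?_⟩
  rw [(quotTensorEquivQuotSMul A I).eq_symm_apply.mpr hz.symm, quotTensorEquivQuotSMul_symm_mk,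
    baseChange_tmul] at hv
  simpa [Submodule.Quotient.eq] using congr(quotTensorEquivQuotSMul B I $hv.symm)

theorem mem_range_of_smul_mem_range {π : R} {I : Ideal R} (hI : I = Ideal.span {π})
    (hπ : IsSMulRegular C π) {a : A →ₗ[R] B} {b : B →ₗ[R] C} (hba : b ∘ₗ a = 0)
    (hab : ker (b.baseChange (R ⧸ I)) ≤ range (a.baseChange (R ⧸ I))) {x : C}
    (hx : π • x ∈ range b) : x ∈ range b := by
  obtain ⟨y, hy⟩ := hx
  have hyI : b y ∈ I • (⊤ : Submodule R C) := by
    rw [hI, Submodule.ideal_span_singleton_smul, hy]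
    exact Submodule.smul_mem_pointwise_smul _ _ _ trivial
  obtain ⟨z, hz⟩ := exists_sub_mem_smul_top_of_ker_baseChange_le_range hab hyI
  rw [hI, Submodule.ideal_span_singleton_smul] at hz
  obtain ⟨u, -, hu⟩ := (Submodule.mem_smul_pointwise_iff_exists _ _ _).mp hz
  refine ⟨u, hπ ?_⟩
  change π • b u = π • x
  rw [← map_smul, hu, map_sub, ← comp_apply b a, hba, LinearMap.zero_apply, sub_zero, hy]

end LinearMap

theorem IsDiscreteValuationRing.isTorsionFree_quotient {R M : Type*} [CommRing R] [IsDomain R]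
    [IsDiscreteValuationRing R] [AddCommGroup M] [Module R M] {π : R} (hπ : Irreducible π)
    {N : Submodule R M} (hN : ∀ x, π • x ∈ N → x ∈ N) : Module.IsTorsionFree R (M ⧸ N) := by
  have hpow : ∀ n x, π ^ n • x ∈ N → x ∈ N := by
    intro n
    induction n with
    | zero => simp
    | succ n ih => exact fun x hx => hN x (ih _ (by rwa [pow_succ, mul_smul] at hx))
  refine .of_smul_eq_zero fun r q hrq => or_iff_not_imp_left.mpr fun hr => ?_
  obtain ⟨x, rfl⟩ := Submodule.Quotient.mk_surjective N q
  obtain ⟨n, u, hu⟩ := associated_pow_irreducible hr hπ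
  rw [← Submodule.Quotient.mk_smul, Submodule.Quotient.mk_eq_zero] at hrq
  rw [Submodule.Quotient.mk_eq_zero]
  refine hpow n x ?_
  rw [← hu, mul_comm, mul_smul]
  exact N.smul_mem _ hrq

/-- Over a discrete valuation ring `R`: (1) every finitely
generated torsion-free `R`-module is free; (2) consequently, if
`C⁻² → C⁻¹ → C⁰ → C¹` is a complex of finite free `R`-modules such that
`H⁻¹(C ⊗ k) = 0` (where `k` is the residue field), then
`H⁰(C) = ker d⁰ / im d⁻¹` is a finite free `R`-module. -/
theorem stmt9 {R : Type u} [CommRing R] [IsDomain R] [IsDiscreteValuationRing R] :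
    (∀ (M : Type u) [AddCommGroup M] [Module R M],
      Module.Finite R M → NoZeroSMulDivisors R M → Module.Free R M) ∧
    (∀ (Cm2 Cm1 C0 C1 : Type u)
      [AddCommGroup Cm2] [Module R Cm2] [Module.Free R Cm2] [Module.Finite R Cm2]
      [AddCommGroup Cm1] [Module R Cm1] [Module.Free R Cm1] [Module.Finite R Cm1]
      [AddCommGroup C0] [Module R C0] [Module.Free R C0] [Module.Finite R C0]
      [AddCommGroup C1] [Module R C1] [Module.Free R C1] [Module.Finite R C1]
      (a : Cm2 →ₗ[R] Cm1) (b : Cm1 →ₗ[R] C0) (c : C0 →ₗ[R] C1),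
      b ∘ₗ a = 0 → c ∘ₗ b = 0 →
      (∀ x ∈ LinearMap.ker (LinearMap.baseChange (IsLocalRing.ResidueField R) b),
        x ∈ LinearMap.range (LinearMap.baseChange (IsLocalRing.ResidueField R) a)) →
      (Module.Free R
          (↥(LinearMap.ker c) ⧸
            (LinearMap.range b).comap (LinearMap.ker c).subtype) ∧
        Module.Finite R
          (↥(LinearMap.ker c) ⧸
            (LinearMap.range b).comap (LinearMap.ker c).subtype))) := by
  refine ⟨fun M _ _ _ _ => Module.free_of_finite_type_torsion_free', ?_⟩
  intro Cm2 Cm1 C0 C1 _ _ _ _ _ _ _ _ _ _ _ _ _ _ _ _ a b c hba _ hexact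
  obtain ⟨π, hπ⟩ := IsDiscreteValuationRing.exists_irreducible R
  have hsat (x : C0) : π • x ∈ range b → x ∈ range b :=
    mem_range_of_smul_mem_range ((IsDiscreteValuationRing.irreducible_iff_uniformizer π).mp hπ)
      (.of_ne_zero hπ.ne_zero) hba hexact
  have : Module.IsTorsionFree R (ker c ⧸ (range b).comap (ker c).subtype) :=
    IsDiscreteValuationRing.isTorsionFree_quotient hπ fun x => hsat x
  exact ⟨inferInstance, inferInstance⟩
end

section
/- Let A be a ring, and let P^{-1} → P^0 → P^1 be a complex of flat A-modules such that for every A-module M of finite length the middle cohomology H^0(P ⊗_A M) vanishes. Then H^0(P ⊗_A M) = 0 for every A-module M, where A is assumed local Noetherian and the modules P^i finitely presented, and moreover P^0/im(P^{-1}) is A-flat and its formation commutes with arbitrary base change A → A'. -/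
/-!
The map `d⁰` factors through `W = P⁰ / im P⁻¹` as `e : W → P¹`, and right exactness of `⊗`
identifies `H⁰(P ⊗ M)` with the kernel of `e ⊗ M`. Taking `M` to be the residue field `k`,
the hypothesis makes `e ⊗ k` injective. Over a local ring a finite flat module is free, and a
map from a finite module to a finite free module that is injective modulo the maximal ideal is
split injective. So `W` is a retract of `P¹`: it is flat, and `e ⊗ M` is injective for every `M`.
-/

open IsLocalRing LinearMap

section Cokernel

variable {R : Type*} [CommRing R] {N M P : Type*}
  [AddCommGroup N] [Module R N] [AddCommGroup M] [Module R M] [AddCommGroup P] [Module R P]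
  (f : N →ₗ[R] M) (g : M →ₗ[R] P) (Q : Type*) [AddCommGroup Q] [Module R Q]

theorem ker_rTensor_mkQ_range :
    ker ((range f).mkQ.rTensor Q) = range (f.rTensor Q) :=
  (rTensor_exact Q f.exact_map_mkQ_range (Submodule.mkQ_surjective _)).linearMap_ker_eq

theorem rTensor_liftQ_range_injective_iff (hfg : g ∘ₗ f = 0) :
    Function.Injective (((range f).liftQ g (range_le_ker_iff.mpr hfg)).rTensor Q) ↔
      ker (g.rTensor Q) ≤ range (f.rTensor Q) := by
  set e := (range f).liftQ g (range_le_ker_iff.mpr hfg)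
  have he : g.rTensor Q = e.rTensor Q ∘ₗ (range f).mkQ.rTensor Q := by
    rw [← rTensor_comp, Submodule.liftQ_mkQ]
  rw [← ker_rTensor_mkQ_range, he, ker_comp, ← ker_eq_bot]
  refine ⟨fun h ↦ by rw [h, Submodule.comap_bot], fun h ↦ eq_bot_iff.mpr fun x hx ↦ ?_⟩
  obtain ⟨y, rfl⟩ := rTensor_surjective Q (Submodule.mkQ_surjective _) x
  exact h hx

end Cokernel

theorem LinearMap.rTensor_injective_of_comp_eq_id {R : Type*} [CommRing R] {M N : Type*}
    [AddCommGroup M] [Module R M] [AddCommGroup N] [Module R N] {i : M →ₗ[R] N}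
    {r : N →ₗ[R] M} (h : r ∘ₗ i = LinearMap.id) (Q : Type*) [AddCommGroup Q] [Module R Q] :
    Function.Injective (i.rTensor Q) :=
  Function.HasLeftInverse.injective ⟨r.rTensor Q, fun x ↦ by
    rw [← comp_apply, ← rTensor_comp, h, rTensor_id, id_apply]⟩

namespace IsLocalRing

variable {R : Type*} [CommRing R] [IsLocalRing R]

theorem isFiniteLength_residueField : IsFiniteLength R (ResidueField R) := by
  have : IsSimpleModule R (ResidueField R) :=
    isSimpleModule_iff_isCoatom.mpr (maximalIdeal.isMaximal R).out
  exact isFiniteLength_iff_isNoetherian_isArtinian.mpr ⟨inferInstance, inferInstance⟩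

theorem exists_comp_eq_id_of_rTensor_residueField_injective {W P : Type*}
    [AddCommGroup W] [Module R W] [Module.Finite R W]
    [AddCommGroup P] [Module R P] [Module.Finite R P] [Module.Flat R P] (e : W →ₗ[R] P)
    (he : Function.Injective (e.rTensor (ResidueField R))) : ∃ l, l ∘ₗ e = LinearMap.id := by
  have : Module.Free R P := Module.free_of_flat_of_isLocalRing
  exact (split_injective_iff_lTensor_residueField_injective e).mpr
    ((lTensor_inj_iff_rTensor_inj _ e).mpr he)

end IsLocalRing

theorem stmt10_general {A : Type u} [CommRing A] [IsLocalRing A]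
    {Pneg P0 P1 : Type u}
    [AddCommGroup Pneg] [Module A Pneg]
    [AddCommGroup P0] [Module A P0] [Module.Finite A P0]
    [AddCommGroup P1] [Module A P1] [Module.Finite A P1] [Module.Flat A P1]
    (dneg : Pneg →ₗ[A] P0) (d0 : P0 →ₗ[A] P1)
    (hcomplex : d0 ∘ₗ dneg = 0)
    (hfl : ∀ (M : Type u) [AddCommGroup M] [Module A M], IsFiniteLength A M →
      ∀ x ∈ LinearMap.ker (LinearMap.rTensor M d0),
        x ∈ LinearMap.range (LinearMap.rTensor M dneg)) :
    (∀ (M : Type u) [AddCommGroup M] [Module A M],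
      ∀ x ∈ LinearMap.ker (LinearMap.rTensor M d0),
        x ∈ LinearMap.range (LinearMap.rTensor M dneg)) ∧
    Module.Flat A (P0 ⧸ LinearMap.range dneg) ∧
    (∀ (M : Type u) [AddCommGroup M] [Module A M],
      LinearMap.ker (LinearMap.rTensor M (LinearMap.range dneg).mkQ) =
        LinearMap.range (LinearMap.rTensor M dneg)) := by
  set e := (range dneg).liftQ d0 (range_le_ker_iff.mpr hcomplex)
  have he_residue : Function.Injective (e.rTensor (ResidueField A)) :=
    (rTensor_liftQ_range_injective_iff dneg d0 _ hcomplex).mpr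
      (hfl _ isFiniteLength_residueField)
  obtain ⟨l, hl⟩ := exists_comp_eq_id_of_rTensor_residueField_injective e he_residue
  refine ⟨fun M _ _ ↦ ?_, .of_retract e l hl, fun M _ _ ↦ ker_rTensor_mkQ_range dneg M⟩
  exact (rTensor_liftQ_range_injective_iff dneg d0 M hcomplex).mp
    (rTensor_injective_of_comp_eq_id hl M)

/-- Let `A` be a local Noetherian ring and
`P⁻¹ → P⁰ → P¹` a complex of finitely presented flat `A`-modules such that
`H⁰(P ⊗ M) = 0` for every `A`-module `M` of finite length.  Then
`H⁰(P ⊗ M) = 0` for every `A`-module `M`, the quotient `P⁰ / im(P⁻¹)` is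
`A`-flat, and its formation commutes with arbitrary base change: for every
`A`-module `M`, the kernel of `P⁰ ⊗ M → (P⁰/im P⁻¹) ⊗ M` is exactly the image
of `P⁻¹ ⊗ M`. -/
theorem stmt10 {A : Type u} [CommRing A] [IsLocalRing A] [IsNoetherianRing A]
    {Pneg P0 P1 : Type u}
    [AddCommGroup Pneg] [Module A Pneg] [Module.Finite A Pneg] [Module.Flat A Pneg]
    [AddCommGroup P0] [Module A P0] [Module.Finite A P0] [Module.Flat A P0]
    [AddCommGroup P1] [Module A P1] [Module.Finite A P1] [Module.Flat A P1]
    (dneg : Pneg →ₗ[A] P0) (d0 : P0 →ₗ[A] P1)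
    (hcomplex : d0 ∘ₗ dneg = 0)
    (hfl : ∀ (M : Type u) [AddCommGroup M] [Module A M], IsFiniteLength A M →
      ∀ x ∈ LinearMap.ker (LinearMap.rTensor M d0),
        x ∈ LinearMap.range (LinearMap.rTensor M dneg)) :
    (∀ (M : Type u) [AddCommGroup M] [Module A M],
      ∀ x ∈ LinearMap.ker (LinearMap.rTensor M d0),
        x ∈ LinearMap.range (LinearMap.rTensor M dneg)) ∧
    Module.Flat A (P0 ⧸ LinearMap.range dneg) ∧
    (∀ (M : Type u) [AddCommGroup M] [Module A M],
      LinearMap.ker (LinearMap.rTensor M (LinearMap.range dneg).mkQ) =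
        LinearMap.range (LinearMap.rTensor M dneg)) :=
  stmt10_general dneg d0 hcomplex hfl
end

section
/- Let (A, m) be a complete local Noetherian ring, X a Noetherian A-scheme, and (J_i) a system of quasi-coherent sheaves on X_i = X ⊗_A A/m^{i+1} with J_i ⊗ A/m^{j+1} ≅ J_j for j ≤ i. Then the inverse limit sheaf J = lim← J_i on the formal completion satisfies J ⊗ O_{X_i} ≅ J_i for all i. (Algebraic version: for B a flat A-algebra of finite type, the limit M = lim← M_i of a compatible system of B/m^{i+1}B-modules satisfies M ⊗_B B/m^{i+1}B ≅ M_i.) -/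
/-!
Surjectivity of `lim← M i → M i` is the usual lifting along surjective transition maps.
For the kernel, let `y` vanish at level `i` and let `t` generate `J ^ (i + 1)`, where
`J = m B` is finitely generated because `A` is Noetherian. If `y - ∑ t k • W k` vanishes at
level `i + s`, then at level `i + s + 1` it lies in `J ^ (i + s + 1) • M = J ^ (i + 1) • J ^ s • M`,
so it can be written as `∑ t k • a k` with `a k ∈ J ^ s • M`; lifting the `a k` to the limit
inside `J ^ s • M` improves the approximation by one level. The corrections made at stage `s`
vanish below level `s`, since `J ^ s` kills `M l` for `l < s`, so the coefficients `W k`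
stabilise levelwise and their diagonal is an exact solution `y = ∑ t k • x k`.
-/

section InverseSystem

variable {R : Type*} [CommRing R] {M : ℕ → Type*} [∀ i, AddCommGroup (M i)] [∀ i, Module R (M i)]
  {f : ∀ i, M (i + 1) →ₗ[R] M i}

theorem invLimit_apply_eq_zero_of_le {x : ∀ i, M i} (hx : x ∈ invLimit f) {l n : ℕ} (hln : l ≤ n)
    (hn : x n = 0) : x l = 0 := by
  induction hln using Nat.decreasingInduction with
  | self => exact hn
  | of_succ k _ ih => rw [← hx k, ih, map_zero]

theorem exists_invLimit_apply_eq (N : ∀ i, Submodule R (M i))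
    (hN : ∀ i, (N (i + 1)).map (f i) = N i) (j : ℕ) (a : M j) (ha : a ∈ N j) :
    ∃ x : invLimit f, (∀ i, x.1 i ∈ N i) ∧ x.1 j = a := by
  induction j generalizing M with
  | zero =>
    have hlift (i : ℕ) (b : N i) : ∃ c : N (i + 1), f i c = b := by
      obtain ⟨c, hc, hcb⟩ := Submodule.mem_map.mp ((hN i).ge b.2)
      exact ⟨⟨c, hc⟩, hcb⟩
    choose g hg using hlift
    let u (i : ℕ) : N i := Nat.rec ⟨a, ha⟩ g i
    exact ⟨⟨fun i => (u i).1, fun i => hg i (u i)⟩, fun i => (u i).2, rfl⟩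
  | succ j ih =>
    -- lift in the system `i ↦ M (i + 1)`, then prepend the image at level `0`
    obtain ⟨x, hxN, hxa⟩ := ih (f := fun i => f (i + 1)) (fun i => N (i + 1)) (fun i => hN (i + 1))
      a ha
    refine ⟨⟨fun | 0 => f 0 (x.1 0) | i + 1 => x.1 i, ?_⟩, ?_, hxa⟩
    · rintro (_ | i)
      · rfl
      · exact x.2 i
    · rintro (_ | i)
      · exact (hN 0).le ⟨_, hxN 0, rfl⟩
      · exact hxN i

theorem invLimit_proj_surjective (hf : ∀ i, Function.Surjective (f i)) (i : ℕ) :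
    Function.Surjective ((LinearMap.proj i) ∘ₗ (invLimit f).subtype) := fun a =>
  have hN (i : ℕ) : (⊤ : Submodule R (M (i + 1))).map (f i) = ⊤ := by
    rw [Submodule.map_top, LinearMap.range_eq_top.mpr (hf i)]
  (exists_invLimit_apply_eq (fun _ => ⊤) hN i a trivial).imp fun _ hx => hx.2

theorem diag_mem_invLimit {X : ℕ → ∀ i, M i} (hX : ∀ n, X n ∈ invLimit f)
    (hstab : ∀ i, X (i + 1) i = X i i) : (fun i => X i i) ∈ invLimit f :=
  fun i => (hX (i + 1) i).trans (hstab i)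

end InverseSystem

theorem exists_eq_sum_smul_of_mem_span_range_smul {B W ι : Type*} [CommRing B] [AddCommGroup W]
    [Module B W] [Fintype ι] (t : ι → B) {Q : Submodule B W} {x : W}
    (hx : x ∈ Ideal.span (Set.range t) • Q) :
    ∃ a : ι → W, (∀ k, a k ∈ Q) ∧ x = ∑ k, t k • a k := by
  refine Submodule.smul_induction_on hx (fun b hb q hq => ?_) ?_
  · obtain ⟨c, rfl⟩ := (Submodule.mem_span_range_iff_exists_fun B).mp hb
    refine ⟨fun k => c k • q, fun k => Q.smul_mem _ hq, ?_⟩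
    simp only [Finset.sum_smul, smul_smul, smul_eq_mul, mul_comm]
  · rintro _ _ ⟨a, ha, rfl⟩ ⟨a', ha', rfl⟩
    exact ⟨a + a', fun k => Q.add_mem (ha k) (ha' k), by simp [smul_add, Finset.sum_add_distrib]⟩

section AdicSystem

variable {B : Type*} [CommRing B] {M : ℕ → Type*} [∀ i, AddCommGroup (M i)] [∀ i, Module B (M i)]
  {f : ∀ i, M (i + 1) →ₗ[B] M i} {J : Ideal B}

theorem exists_invLimit_sub_sum_smul_apply_eq_zero {ι : Type*} [Fintype ι] {i : ℕ} (t : ι → B)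
    (ht : Ideal.span (Set.range t) = J ^ (i + 1)) (hsurj : ∀ i, Function.Surjective (f i))
    (hker : ∀ i, LinearMap.ker (f i) = J ^ (i + 1) • (⊤ : Submodule B (M (i + 1))))
    {s : ℕ} (z : invLimit f) (hz : z.1 (i + s) = 0) :
    ∃ w : ι → invLimit f, (∀ k l, (w k).1 l ∈ J ^ s • (⊤ : Submodule B (M l))) ∧
      (z - ∑ k, t k • w k).1 (i + s + 1) = 0 := by
  have hz' : z.1 (i + s + 1) ∈ Ideal.span (Set.range t) • (J ^ s • ⊤ : Submodule B _) := by
    rw [ht, ← mul_smul, ← pow_add, show i + 1 + s = i + s + 1 by omega, ← hker]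
    exact (z.2 (i + s)).trans hz
  obtain ⟨a, ha, hza⟩ := exists_eq_sum_smul_of_mem_span_range_smul t hz'
  have hN (l : ℕ) : (J ^ s • ⊤ : Submodule B (M (l + 1))).map (f l) = J ^ s • ⊤ := by
    rw [Submodule.map_smul'', Submodule.map_top, LinearMap.range_eq_top.mpr (hsurj l)]
  choose w hw hwa using fun k => exists_invLimit_apply_eq (fun l => J ^ s • ⊤) hN _ (a k) (ha k)
  refine ⟨w, hw, ?_⟩
  simp [hza, hwa, Finset.sum_apply]

theorem invLimit_ker_proj_eq_pow_smul_top (hJ : J.FG)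
    (htor : ∀ i, ∀ b ∈ J ^ (i + 1), ∀ x : M i, b • x = 0)
    (hsurj : ∀ i, Function.Surjective (f i))
    (hker : ∀ i, LinearMap.ker (f i) = J ^ (i + 1) • (⊤ : Submodule B (M (i + 1)))) (i : ℕ) :
    LinearMap.ker ((LinearMap.proj i) ∘ₗ (invLimit f).subtype) =
      J ^ (i + 1) • (⊤ : Submodule B (invLimit f)) := by
  refine le_antisymm (fun (y : invLimit f) (hy : y.1 i = 0) => ?_)
    (Submodule.smul_le.mpr fun b hb z _ => ?_)
  · obtain ⟨r, t, ht⟩ := Submodule.fg_iff_exists_fin_generating_family.mp (hJ.pow (n := i + 1))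
    choose! w hw hwy using fun s (W : Fin r → invLimit f)
      (hW : (y - ∑ k, t k • W k).1 (i + s) = 0) =>
        exists_invLimit_sub_sum_smul_apply_eq_zero t ht hsurj hker _ hW
    -- `W s` are the coefficients of an approximation of `y` that is exact up to level `i + s`
    let W (s : ℕ) : Fin r → invLimit f := Nat.rec 0 (fun s V => V + w s V) s
    have hW (s : ℕ) : (y - ∑ k, t k • W s k).1 (i + s) = 0 := by
      induction s with
      | zero => simpa [W] using hy
      | succ s ih =>
        change (y - ∑ k, t k • W (s + 1) k).1 (i + s + 1) = 0
        simpa [W, smul_add, Finset.sum_add_distrib, sub_add_eq_sub_sub, ← add_assoc]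
          using hwy s _ ih
    have hstab (k : Fin r) (l : ℕ) : (W (l + 2) k).1 l = (W (l + 1) k).1 l := by
      have : (w (l + 1) (W (l + 1)) k).1 l = 0 := by
        refine Submodule.smul_induction_on (hw _ _ (hW _) k l) (fun b hb x _ => htor l b hb x) ?_
        intro u v hu hv
        rw [hu, hv, add_zero]
      simp [W, this]
    let x (k : Fin r) : invLimit f :=
      ⟨fun l => (W (l + 1) k).1 l, diag_mem_invLimit (fun n => (W (n + 1) k).2) (hstab k)⟩
    have hyx : y = ∑ k, t k • x k := by
      ext l
      have := invLimit_apply_eq_zero_of_le (y - ∑ k, t k • W (l + 1) k).2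
        (show l ≤ i + (l + 1) by omega) (hW (l + 1))
      simpa [x, Finset.sum_apply, sub_eq_zero] using this
    rw [hyx]
    exact Submodule.sum_mem _ fun k _ =>
      Submodule.smul_mem_smul (ht ▸ Submodule.subset_span ⟨k, rfl⟩) Submodule.mem_top
  · simp [htor i b hb]

end AdicSystem

/-- algebraic version.  Let `A` be a Noetherian ring with an
ideal `m`, `B` an `A`-algebra, and `(M i)` a compatible system of
`B/m^(i+1)B`-modules (surjective `B`-linear transition maps `f i` with kernel
`m^(i+1)B • M (i+1)`, each `M i` killed by `m^(i+1)B`).  Then the inverse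
limit `M = lim← M i` satisfies `M ⊗_B B/m^(i+1)B ≅ M i`: the projection
`M → M i` is surjective with kernel `m^(i+1)B • M`. -/
theorem stmt12 {A : Type*} [CommRing A] [IsNoetherianRing A] (m : Ideal A)
    {B : Type*} [CommRing B] [Algebra A B]
    {M : ℕ → Type*} [∀ i, AddCommGroup (M i)] [∀ i, Module B (M i)]
    (f : ∀ i, M (i + 1) →ₗ[B] M i)
    (htor : ∀ i, ∀ b ∈ Ideal.map (algebraMap A B) (m ^ (i + 1)), ∀ x : M i, b • x = 0)
    (hsurj : ∀ i, Function.Surjective (f i))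
    (hker : ∀ i, LinearMap.ker (f i) =
      Ideal.map (algebraMap A B) (m ^ (i + 1)) • (⊤ : Submodule B (M (i + 1)))) :
    ∀ i, Function.Surjective ((LinearMap.proj i) ∘ₗ (invLimit f).subtype) ∧
      LinearMap.ker ((LinearMap.proj i) ∘ₗ (invLimit f).subtype) =
        Ideal.map (algebraMap A B) (m ^ (i + 1)) •
          (⊤ : Submodule B ↥(invLimit f)) := by
  simp only [Ideal.map_pow] at htor hker ⊢
  have hJ : (m.map (algebraMap A B)).FG := Ideal.FG.map (IsNoetherian.noetherian m) _
  exact fun i =>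
    ⟨invLimit_proj_surjective hsurj i, invLimit_ker_proj_eq_pow_smul_top hJ htor hsurj hker i⟩
end

section
/- With the setup of the obstruction construction (square-zero extension A → A₀ with kernel I, flat A-algebra B, bounded-above complex P₀ of free B₀-modules, lifts P^i of terms): if the obstruction class ω ∈ Ext²_{B₀}(P₀, I ⊗ P₀) vanishes, then there exist lifts d^i : P^i → P^{i+1} of the differentials satisfying d^{i+1} ∘ d^i = 0, i.e., the complex P₀ lifts to a complex of free B-modules. -/
/-- Setup of the obstruction construction: `0 → I → A → A₀`
a square-zero extension, `B` a flat `A`-algebra, `J = I·B`, and `(Pⁱ, dⁱ)` a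
bounded-above family of free `B`-modules with maps lifting the differentials
of a complex of free `B₀ = B/J`-modules (so `d^{i+1} ∘ dⁱ` has image in
`J • P^{i+2}`).  If the obstruction class vanishes, i.e. the obstruction
cochain `δⁱ = d^{i+1} ∘ dⁱ` is the coboundary of a chain homotopy `s` with
values in `J • P`, then the differentials can be corrected to lifts
`d'ⁱ ≡ dⁱ mod J` satisfying `d'^{i+1} ∘ d'ⁱ = 0`: the complex `P₀` lifts to a
complex of free `B`-modules. -/
theorem stmt14 {A A₀ B : Type u} [CommRing A] [CommRing A₀] [CommRing B]
    [Algebra A A₀] [Algebra A B] [Module.Flat A B]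
    (hsurj : Function.Surjective (algebraMap A A₀))
    (I : Ideal A) (hIdef : I = RingHom.ker (algebraMap A A₀))
    (hI2 : I * I = ⊥)
    (J : Ideal B) (hJdef : J = I.map (algebraMap A B))
    {P : ℤ → Type u} [∀ i, AddCommGroup (P i)] [∀ i, Module B (P i)]
    [∀ i, Module.Free B (P i)]
    (N : ℤ) (hbd : ∀ i, N < i → Subsingleton (P i))
    (d : ∀ i, P i →ₗ[B] P (i + 1))
    (hdd : ∀ i (x : P i), d (i + 1) (d i x) ∈ J • (⊤ : Submodule B (P (i + 1 + 1))))
    (hvanish : ∃ s : ∀ i, P i →ₗ[B] P (i + 1),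
      (∀ i (x : P i), s i x ∈ J • (⊤ : Submodule B (P (i + 1)))) ∧
      ∀ i (x : P i), d (i + 1) (d i x) = d (i + 1) (s i x) + s (i + 1) (d i x)) :
    ∃ d' : ∀ i, P i →ₗ[B] P (i + 1),
      (∀ i (x : P i), d' i x - d i x ∈ J • (⊤ : Submodule B (P (i + 1)))) ∧
      ∀ i (x : P i), d' (i + 1) (d' i x) = 0 := by
  obtain ⟨s, hsJ, hs⟩ := hvanish
  have hJJ : J * J = ⊥ := by
    rw [hJdef, ← Ideal.map_mul, hI2, Ideal.map_bot]
  refine ⟨fun i => d i - s i, ?_, ?_⟩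
  · intro i x
    simpa using Submodule.neg_mem _ (hsJ i x)
  · intro i x
    have hss : s (i + 1) (s i x) = 0 := by
      have h1 : s (i + 1) (s i x) ∈ Submodule.map (s (i + 1)) (J • (⊤ : Submodule B (P (i + 1)))) :=
        Submodule.mem_map_of_mem (hsJ i x)
      rw [Submodule.map_smul''] at h1
      have h2 : J • Submodule.map (s (i + 1)) (⊤ : Submodule B (P (i + 1)))
          ≤ J • (J • (⊤ : Submodule B (P (i + 1 + 1)))) := by
        refine Submodule.smul_mono le_rfl ?_
        rintro y ⟨z, -, rfl⟩
        exact hsJ (i + 1) z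
      have h3 := h2 h1
      rw [← Submodule.smul_assoc, smul_eq_mul, hJJ, Submodule.bot_smul] at h3
      simpa using h3
    simp only [LinearMap.sub_apply, map_sub, LinearMap.map_sub]
    rw [hs i x, hss]
    abel
end

section
/- Let R be a complete local Noetherian ring with maximal ideal m. Let F and J be complexes of sheaves of modules on the formal completion of a scheme X over R, each consisting of Spf(R)-ind-flat ind-quasi-coherent sheaves. If a map of complexes φ : F → J induces quasi-isomorphisms φ_n : F ⊗ R/m^{n+1} → J ⊗ R/m^{n+1} for all n, then φ is a quasi-isomorphism. (Algebraic version: if K is a complex of modules over the completion, each term an inverse limit of a compatible flat system over R/m^{n+1}, with K ⊗ R/m^{n+1} acyclic for all n, then K is acyclic.) -/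
/-- The reduction of a linear map `f : M → N` modulo an ideal `I`, i.e. the
induced map `M/IM → N/IN`. -/
def qmap {R M N : Type u} [CommRing R] [AddCommGroup M] [Module R M]
    [AddCommGroup N] [Module R N] (I : Ideal R) (f : M →ₗ[R] N) :
    (M ⧸ (I • ⊤ : Submodule R M)) →ₗ[R] (N ⧸ (I • ⊤ : Submodule R N)) :=
  Submodule.mapQ _ _ f (by
    rw [← Submodule.map_le_iff_le_comap, Submodule.map_smul'']
    exact smul_mono_right _ le_top)

lemma map_smul_top_mem {R M N : Type u} [CommRing R] [AddCommGroup M] [Module R M]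
    [AddCommGroup N] [Module R N] (I : Ideal R) (g : M →ₗ[R] N) {x : M}
    (hx : x ∈ (I • ⊤ : Submodule R M)) : g x ∈ (I • ⊤ : Submodule R N) := by
  have h : Submodule.map g (I • ⊤) ≤ (I • ⊤ : Submodule R N) := by
    rw [Submodule.map_smul'']
    exact Submodule.smul_mono le_rfl le_top
  exact h ⟨x, hx, rfl⟩

lemma keyStep {R A B C D : Type u} [CommRing R]
    [AddCommGroup A] [Module R A] [AddCommGroup B] [Module R B]
    [AddCommGroup C] [Module R C] [AddCommGroup D] [Module R D]
    (I J : Ideal R) (hJI : J ≤ I)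
    (f : A →ₗ[R] B) (g : B →ₗ[R] C) (h : C →ₗ[R] D)
    (hgf : ∀ a, g (f a) = 0) (hhg : ∀ b, h (g b) = 0)
    (hB : Function.Exact (qmap I f) (qmap I g))
    (hC : Function.Exact (qmap J g) (qmap J h))
    (y : C) (hy : h y = 0) (x : B) (hx : y - g x ∈ (I • ⊤ : Submodule R C)) :
    ∃ x' : B, (y - g x' ∈ (J • ⊤ : Submodule R C)) ∧ x' - x ∈ (I • ⊤ : Submodule R B) := by
  set w := y - g x with hw
  have hhw : h w = 0 := by
    rw [hw, map_sub, hy, hhg, sub_zero]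
  have h1 : qmap J h (Submodule.Quotient.mk w) = 0 := by
    rw [qmap, Submodule.mapQ_apply, hhw]
    exact Submodule.Quotient.mk_eq_zero _ |>.mpr (Submodule.zero_mem _)
  obtain ⟨bbar, hbbar⟩ := (hC _).mp h1
  obtain ⟨b, rfl⟩ := Submodule.Quotient.mk_surjective _ bbar
  have h2 : g b - w ∈ (J • ⊤ : Submodule R C) := by
    rw [qmap, Submodule.mapQ_apply] at hbbar
    rwa [Submodule.Quotient.eq] at hbbar
  have h3 : qmap I g (Submodule.Quotient.mk b) = 0 := by
    rw [qmap, Submodule.mapQ_apply, Submodule.Quotient.mk_eq_zero]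
    have e : g b = (g b - w) + w := by abel
    rw [e]
    exact Submodule.add_mem _ (Submodule.smul_mono_left hJI h2) hx
  obtain ⟨abar, habar⟩ := (hB _).mp h3
  obtain ⟨a, rfl⟩ := Submodule.Quotient.mk_surjective _ abar
  have h4 : f a - b ∈ (I • ⊤ : Submodule R B) := by
    rw [qmap, Submodule.mapQ_apply] at habar
    rwa [Submodule.Quotient.eq] at habar
  refine ⟨x + (b - f a), ?_, ?_⟩
  · have e : y - g (x + (b - f a)) = -(g b - w) := by
      rw [map_add, map_sub, hgf, hw]; abel
    rw [e]
    exact Submodule.neg_mem _ h2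
  · simpa using Submodule.neg_mem _ h4

/-- algebraic version.  Let `R` be a complete local
Noetherian ring with maximal ideal `m`, and let `K` be a (cochain) complex of
`R`-modules each of which is `m`-adically complete (the limit of its
reductions), with each reduction `Kⁱ/m^(n+1)Kⁱ` flat over `R/m^(n+1)`
(ind-flatness over `Spf R`).  If the reduction of the complex modulo
`m^(n+1)` is acyclic for every `n`, then `K` is acyclic. -/
theorem stmt16 {R : Type u} [CommRing R] [IsLocalRing R] [IsNoetherianRing R]
    [IsAdicComplete (IsLocalRing.maximalIdeal R) R]
    {K : ℤ → Type u} [∀ i, AddCommGroup (K i)] [∀ i, Module R (K i)]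
    (hcompl : ∀ i, IsAdicComplete (IsLocalRing.maximalIdeal R) (K i))
    (hflat : ∀ (i : ℤ) (n : ℕ),
      Module.Flat (R ⧸ (IsLocalRing.maximalIdeal R ^ (n + 1)))
        (K i ⧸ ((IsLocalRing.maximalIdeal R ^ (n + 1)) • (⊤ : Submodule R (K i)))))
    (d : ∀ i, K i →ₗ[R] K (i + 1))
    (hdd : ∀ i (x : K i), d (i + 1) (d i x) = 0)
    (hexact : ∀ (n : ℕ) (i : ℤ),
      Function.Exact (qmap ((IsLocalRing.maximalIdeal R) ^ (n + 1)) (d i))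
        (qmap ((IsLocalRing.maximalIdeal R) ^ (n + 1)) (d (i + 1)))) :
    ∀ i, Function.Exact (d i) (d (i + 1)) := by
  intro i
  obtain ⟨j, rfl⟩ : ∃ j, i = j + 1 := ⟨i - 1, by ring⟩
  set m := IsLocalRing.maximalIdeal R with hm
  have hexact' : ∀ (n : ℕ) (i : ℤ),
      Function.Exact (qmap (m ^ n) (d i)) (qmap (m ^ n) (d (i + 1))) := by
    intro n i
    cases n with
    | zero =>
      have htop : ∀ k : ℤ, (m ^ 0 • ⊤ : Submodule R (K k)) = ⊤ := by
        intro k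
        simp [Ideal.one_eq_top, Submodule.top_smul]
      haveI h1 : Subsingleton (K (i + 1) ⧸ (m ^ 0 • ⊤ : Submodule R (K (i + 1)))) :=
        Submodule.Quotient.subsingleton_iff.mpr (htop _)
      haveI h2 : Subsingleton (K (i + 1 + 1) ⧸ (m ^ 0 • ⊤ : Submodule R (K (i + 1 + 1)))) :=
        Submodule.Quotient.subsingleton_iff.mpr (htop _)
      intro y
      constructor
      · intro _
        exact ⟨0, Subsingleton.elim _ _⟩
      · intro _
        exact Subsingleton.elim _ _
    | succ n => exact hexact n i
  set g := d (j + 1) with hgdef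
  set h := d (j + 1 + 1) with hhdef
  intro y
  constructor
  · intro hy
    have step : ∀ (n : ℕ) (x : K (j + 1)),
        y - g x ∈ (m ^ n • ⊤ : Submodule R (K (j + 1 + 1))) →
        ∃ x' : K (j + 1), (y - g x' ∈ (m ^ (n + 1) • ⊤ : Submodule R (K (j + 1 + 1)))) ∧
          x' - x ∈ (m ^ n • ⊤ : Submodule R (K (j + 1))) := by
      intro n x hx
      exact keyStep (m ^ n) (m ^ (n + 1)) (Ideal.pow_le_pow_right (by omega))
        (d j) g h (fun a => hdd j a) (fun b => hdd (j + 1) b)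
        (hexact' n j) (hexact' (n + 1) (j + 1)) y hy x hx
    choose step1 hstep1 hstep2 using step
    let aux : ∀ n : ℕ, {x : K (j + 1) // y - g x ∈ (m ^ n • ⊤ : Submodule R (K (j + 1 + 1)))} :=
      fun n => Nat.rec
        ⟨0, by simp [Ideal.one_eq_top, Submodule.top_smul]⟩
        (fun n p => ⟨step1 n p.1 p.2, hstep1 n p.1 p.2⟩) n
    have hdiff : ∀ n : ℕ, (aux (n + 1)).1 - (aux n).1 ∈ (m ^ n • ⊤ : Submodule R (K (j + 1))) :=
      fun n => hstep2 n (aux n).1 (aux n).2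
    have hchain : ∀ {a b : ℕ}, a ≤ b →
        (aux a).1 ≡ (aux b).1 [SMOD (m ^ a • ⊤ : Submodule R (K (j + 1)))] := by
      intro a b hab
      induction hab with
      | refl => rfl
      | @step b hab ih =>
        refine ih.trans ?_
        rw [SModEq.sub_mem]
        have := hdiff b
        have hle : (m ^ b • ⊤ : Submodule R (K (j + 1))) ≤ m ^ a • ⊤ :=
          Submodule.smul_mono_left (Ideal.pow_le_pow_right hab)
        simpa using hle (Submodule.neg_mem _ this)
    haveI := hcompl (j + 1)
    haveI := hcompl (j + 1 + 1)
    obtain ⟨L, hL⟩ := IsPrecomplete.prec (IsAdicComplete.toIsPrecomplete (I := m) (M := K (j+1))) (f := fun n => (aux n).1) (fun {a b} hab => hchain hab)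
    have hgoal : ∀ n : ℕ, y - g L ∈ (m ^ n • ⊤ : Submodule R (K (j + 1 + 1))) := by
      intro n
      have h1 := (aux n).2
      have h2 : (aux n).1 - L ∈ (m ^ n • ⊤ : Submodule R (K (j + 1))) :=
        (SModEq.sub_mem).mp (hL n)
      have h3 : g ((aux n).1 - L) ∈ (m ^ n • ⊤ : Submodule R (K (j + 1 + 1))) :=
        map_smul_top_mem _ g h2
      have e : y - g L = (y - g (aux n).1) + g ((aux n).1 - L) := by
        rw [map_sub]; abel
      rw [e]
      exact Submodule.add_mem _ h1 h3
    have hzero : y - g L = 0 :=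
      IsHausdorff.haus (inferInstance : IsAdicComplete m (K (j+1+1))).toIsHausdorff _
        (fun n => SModEq.zero.mpr (hgoal n))
    exact ⟨L, (sub_eq_zero.mp hzero).symm⟩
  · rintro ⟨x, rfl⟩
    exact hdd (j + 1) x
end
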